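/- Let n ≥ 1, let Γ_0,…,Γ_{2n−1} be the n-qubit Jordan–Wigner Majorana operators Γ_{2i} := Z^{⊗i} ⊗ X ⊗ I^{⊗(n−1−i)}, Γ_{2i+1} := Z^{⊗i} ⊗ Y ⊗ I^{⊗(n−1−i)}, and let I ⊆ {0,…,n−1}. On (ℂ²)^{⊗(n+1)} define the stabilizer S := Z_I ⊗ Z (Pauli Z on each qubit in I, identity on the other first-n qubits, and Z on the ancilla) and the modified Majorana operators μ_k := Γ_k ⊗ X if ⌊k/2⌋ ∈ I and μ_k := Γ_k ⊗ I₂ otherwise, for k ∈ {0,…,2n−1}. Then: (1) S is self-adjoint and S² = I; (2) each μ_k is self-adjoint; (3) μ_j μ_k + μ_k μ_j = 2δ_{jk} I for all j,k; and (4) μ_k S = S μ_k for all k. -/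

import Mathlib

open Matrix Finset
open scoped symmDiff

namespace FQ

/-- Pauli X. -/
noncomputable def X : Matrix (ZMod 2) (ZMod 2) ℂ := !![0, 1; 1, 0]

/-- Pauli Y. -/
noncomputable def Y : Matrix (ZMod 2) (ZMod 2) ℂ := !![0, -Complex.I; Complex.I, 0]

/-- Pauli Z. -/
noncomputable def Z : Matrix (ZMod 2) (ZMod 2) ℂ := !![1, 0; 0, -1]

/-- Tensor product `M 0 ⊗ M 1 ⊗ ⋯ ⊗ M (n-1)` of a family of single-qubit operators, as a
`2^n × 2^n` matrix indexed by functions `Fin n → ZMod 2`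
(the identification of `(ℂ²)^⊗n` with `ℂ^(2^n)`). -/
noncomputable def tens {n : ℕ} (M : Fin n → Matrix (ZMod 2) (ZMod 2) ℂ) :
    Matrix (Fin n → ZMod 2) (Fin n → ZMod 2) ℂ :=
  Matrix.of fun f g => ∏ i, M i (f i) (g i)

/-- The `n`-qubit Jordan–Wigner Majorana operators:
`gamma n (2i) = Z^⊗i ⊗ X ⊗ I^⊗(n-1-i)` and `gamma n (2i+1) = Z^⊗i ⊗ Y ⊗ I^⊗(n-1-i)`. -/
noncomputable def gamma (n k : ℕ) : Matrix (Fin n → ZMod 2) (Fin n → ZMod 2) ℂ :=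
  tens fun j => if (j : ℕ) < k / 2 then Z
    else if (j : ℕ) = k / 2 then (if k % 2 = 0 then X else Y) else 1

/-- The Pauli string `X_S`: Pauli `X` on each tensor factor in `S`, identity elsewhere. -/
noncomputable def Xstr {n : ℕ} (S : Finset (Fin n)) :
    Matrix (Fin n → ZMod 2) (Fin n → ZMod 2) ℂ :=
  tens fun j => if j ∈ S then X else 1

/-- The Pauli string `Y_S`: Pauli `Y` on each tensor factor in `S`, identity elsewhere. -/
noncomputable def Ystr {n : ℕ} (S : Finset (Fin n)) :
    Matrix (Fin n → ZMod 2) (Fin n → ZMod 2) ℂ :=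
  tens fun j => if j ∈ S then Y else 1

/-- The Pauli string `Z_S`: Pauli `Z` on each tensor factor in `S`, identity elsewhere. -/
noncomputable def Zstr {n : ℕ} (S : Finset (Fin n)) :
    Matrix (Fin n → ZMod 2) (Fin n → ZMod 2) ℂ :=
  tens fun j => if j ∈ S then Z else 1

/-- The operator `A ⊗ M` on `(ℂ²)^⊗(n+1)`: `A` on the first `n` qubits and the single-qubit
operator `M` on the ancilla qubit. -/
noncomputable def extend {n : ℕ} (A : Matrix (Fin n → ZMod 2) (Fin n → ZMod 2) ℂ)
    (M : Matrix (ZMod 2) (ZMod 2) ℂ) :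
    Matrix (Fin (n + 1) → ZMod 2) (Fin (n + 1) → ZMod 2) ℂ :=
  Matrix.of fun f g =>
    A (fun j => f j.castSucc) (fun j => g j.castSucc) * M (f (Fin.last n)) (g (Fin.last n))

/-- The stabilizer `S = Z_I ⊗ Z` on `(ℂ²)^⊗(n+1)`: Pauli `Z` on each qubit in `I`, identity on
the other first-`n` qubits, and `Z` on the ancilla. -/
noncomputable def stab (n : ℕ) (I : Finset (Fin n)) :
    Matrix (Fin (n + 1) → ZMod 2) (Fin (n + 1) → ZMod 2) ℂ :=
  extend (Zstr I) Z

/-- The modified Majorana operators `μ_k = Γ_k ⊗ X` if `⌊k/2⌋ ∈ I` and `μ_k = Γ_k ⊗ I₂`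
otherwise. -/
noncomputable def mu (n : ℕ) (I : Finset (Fin n)) (k : ℕ) :
    Matrix (Fin (n + 1) → ZMod 2) (Fin (n + 1) → ZMod 2) ℂ :=
  if h : k / 2 < n then
    (if (⟨k / 2, h⟩ : Fin n) ∈ I then extend (gamma n k) X else extend (gamma n k) 1)
  else extend (gamma n k) 1

/-! The operators Γ_k, μ_k and S are tensor products of single-qubit Paulis, and two such products
commute or anticommute according to the parity of the number of positions at which their factors
anticommute. The factors of Γ_j and Γ_k (j < k) anticommute only at position ⌊j/2⌋, and the
ancilla factors of μ_j and μ_k (each X or I₂) commute, so the μ_k inherit the Majorana relations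
of the Γ_k. The factors of Γ_k and Z_I anticommute only at position ⌊k/2⌋ and only if ⌊k/2⌋ ∈ I,
which is exactly when the ancilla factor of μ_k is X, anticommuting with the ancilla factor Z of
S: the two signs cancel. -/

-- `ZMod 2` is `Fin 2` by definition, so the single-qubit identities are checked on `Fin 2`.
lemma X_mul_self : X * X = 1 := by
  have h : (!![0, 1; 1, 0] : Matrix (Fin 2) (Fin 2) ℂ) * !![0, 1; 1, 0] = 1 := by
    simp [one_fin_two]
  exact h

lemma Y_mul_self : Y * Y = 1 := by
  have h : (!![0, -Complex.I; Complex.I, 0] : Matrix (Fin 2) (Fin 2) ℂ) *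
      !![0, -Complex.I; Complex.I, 0] = 1 := by
    simp [one_fin_two]
  exact h

lemma Z_mul_self : Z * Z = 1 := by
  have h : (!![1, 0; 0, -1] : Matrix (Fin 2) (Fin 2) ℂ) * !![1, 0; 0, -1] = 1 := by
    simp [one_fin_two]
  exact h

lemma X_mul_Y : X * Y = -(Y * X) := by
  have h : (!![0, 1; 1, 0] : Matrix (Fin 2) (Fin 2) ℂ) * !![0, -Complex.I; Complex.I, 0] =
      -(!![0, -Complex.I; Complex.I, 0] * !![0, 1; 1, 0]) := by
    simp
  exact h

lemma X_mul_Z : X * Z = -(Z * X) := by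
  have h : (!![0, 1; 1, 0] : Matrix (Fin 2) (Fin 2) ℂ) * !![1, 0; 0, -1] =
      -(!![1, 0; 0, -1] * !![0, 1; 1, 0]) := by
    simp
  exact h

lemma Y_mul_Z : Y * Z = -(Z * Y) := by
  have h : (!![0, -Complex.I; Complex.I, 0] : Matrix (Fin 2) (Fin 2) ℂ) * !![1, 0; 0, -1] =
      -(!![1, 0; 0, -1] * !![0, -Complex.I; Complex.I, 0]) := by
    simp
  exact h

lemma isHermitian_X : X.IsHermitian := by
  have h : (!![0, 1; 1, 0] : Matrix (Fin 2) (Fin 2) ℂ).IsHermitian := by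
    ext i j; fin_cases i <;> fin_cases j <;> simp
  exact h

lemma isHermitian_Y : Y.IsHermitian := by
  have h : (!![0, -Complex.I; Complex.I, 0] : Matrix (Fin 2) (Fin 2) ℂ).IsHermitian := by
    ext i j; fin_cases i <;> fin_cases j <;> simp
  exact h

lemma isHermitian_Z : Z.IsHermitian := by
  have h : (!![1, 0; 0, -1] : Matrix (Fin 2) (Fin 2) ℂ).IsHermitian := by
    ext i j; fin_cases i <;> fin_cases j <;> simp
  exact h

section Tens

variable {n : ℕ} (M N : Fin n → Matrix (ZMod 2) (ZMod 2) ℂ)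

lemma tens_mul : tens M * tens N = tens fun i => M i * N i := by
  ext f g
  simp only [tens, mul_apply, of_apply, Fintype.prod_sum, prod_mul_distrib]

lemma tens_one : tens (fun _ : Fin n => (1 : Matrix (ZMod 2) (ZMod 2) ℂ)) = 1 := by
  ext f g
  simp [tens, one_apply, prod_boole, funext_iff]

lemma tens_conjTranspose : (tens M)ᴴ = tens fun i => (M i)ᴴ := by
  ext f g
  simp [tens, conjTranspose_apply, star_prod]

lemma tens_smul (c : Fin n → ℂ) : (tens fun i => c i • M i) = (∏ i, c i) • tens M := by
  ext f g
  simp [tens, prod_mul_distrib]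

variable {M N}

lemma tens_mul_self (h : ∀ i, M i * M i = 1) : tens M * tens M = 1 := by
  rw [tens_mul, funext h, tens_one]

lemma isHermitian_tens (h : ∀ i, (M i).IsHermitian) : (tens M).IsHermitian := by
  rw [IsHermitian, tens_conjTranspose, funext fun i => (h i).eq]

lemma tens_commute (h : ∀ i, Commute (M i) (N i)) : Commute (tens M) (tens N) := by
  rw [Commute, SemiconjBy, tens_mul, tens_mul, funext fun i => (h i).eq]

lemma tens_anticommute (a : Fin n) (ha : M a * N a = -(N a * M a))
    (h : ∀ i ≠ a, Commute (M i) (N i)) : tens M * tens N = -(tens N * tens M) := by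
  have hsign : ∀ i, M i * N i = (if i = a then -1 else 1 : ℂ) • (N i * M i) := by
    intro i
    split_ifs with hi
    · subst hi; rw [ha, neg_one_smul]
    · rw [(h i hi).eq, one_smul]
  rw [tens_mul, tens_mul, funext hsign, tens_smul, Fintype.prod_ite_eq', neg_one_smul]

end Tens

section Extend

open scoped Kronecker

variable {n : ℕ} (A B : Matrix (Fin n → ZMod 2) (Fin n → ZMod 2) ℂ)
  (M N : Matrix (ZMod 2) (ZMod 2) ℂ)

def ancillaEquiv (n : ℕ) : (Fin n → ZMod 2) × ZMod 2 ≃ (Fin (n + 1) → ZMod 2) :=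
  (Equiv.prodComm _ _).trans (Fin.snocEquiv fun _ => ZMod 2)

lemma extend_eq_submatrix_kronecker :
    extend A M = (A ⊗ₖ M).submatrix (ancillaEquiv n).symm (ancillaEquiv n).symm :=
  rfl

lemma extend_mul : extend A M * extend B N = extend (A * B) (M * N) := by
  simp only [extend_eq_submatrix_kronecker, submatrix_mul_equiv, mul_kronecker_mul]

lemma extend_conjTranspose : (extend A M)ᴴ = extend Aᴴ Mᴴ := by
  simp only [extend_eq_submatrix_kronecker, conjTranspose_submatrix, conjTranspose_kronecker]

lemma extend_one : extend (1 : Matrix (Fin n → ZMod 2) (Fin n → ZMod 2) ℂ) 1 = 1 := by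
  rw [extend_eq_submatrix_kronecker, one_kronecker_one, submatrix_one_equiv]

lemma extend_neg_left : extend (-A) M = -extend A M := by
  ext f g
  simp [extend]

lemma extend_neg_right : extend A (-M) = -extend A M := by
  ext f g
  simp [extend]

variable {A B M N}

lemma extend_mul_self (hA : A * A = 1) (hM : M * M = 1) : extend A M * extend A M = 1 := by
  rw [extend_mul, hA, hM, extend_one]

lemma isHermitian_extend (hA : A.IsHermitian) (hM : M.IsHermitian) :
    (extend A M).IsHermitian := by
  rw [IsHermitian, extend_conjTranspose, hA.eq, hM.eq]

lemma commute_extend (hAB : Commute A B) (hMN : Commute M N) :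
    Commute (extend A M) (extend B N) := by
  rw [Commute, SemiconjBy, extend_mul, extend_mul, hAB.eq, hMN.eq]

lemma extend_anticommute (hAB : A * B = -(B * A)) (hMN : Commute M N) :
    extend A M * extend B N = -(extend B N * extend A M) := by
  rw [extend_mul, extend_mul, hAB, hMN.eq, extend_neg_left]

lemma extend_commute_of_anticommute (hAB : A * B = -(B * A)) (hMN : M * N = -(N * M)) :
    Commute (extend A M) (extend B N) := by
  rw [Commute, SemiconjBy, extend_mul, extend_mul, hAB, hMN, extend_neg_left, extend_neg_right,
    neg_neg]

end Extend

noncomputable def gammaFactor (k i : ℕ) : Matrix (ZMod 2) (ZMod 2) ℂ :=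
  if i < k / 2 then Z else if i = k / 2 then (if k % 2 = 0 then X else Y) else 1

lemma gamma_eq_tens (n k : ℕ) : gamma n k = tens fun i => gammaFactor k i := rfl

lemma gammaFactor_mul_self (k i : ℕ) : gammaFactor k i * gammaFactor k i = 1 := by
  unfold gammaFactor
  split_ifs <;> simp only [X_mul_self, Y_mul_self, Z_mul_self, mul_one]

lemma isHermitian_gammaFactor (k i : ℕ) : (gammaFactor k i).IsHermitian := by
  unfold gammaFactor
  split_ifs <;> simp only [isHermitian_X, isHermitian_Y, isHermitian_Z, isHermitian_one]

lemma gammaFactor_anticommute {j k : ℕ} (hjk : j < k) :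
    gammaFactor j (j / 2) * gammaFactor k (j / 2) =
      -(gammaFactor k (j / 2) * gammaFactor j (j / 2)) := by
  unfold gammaFactor
  split_ifs <;> first | omega | simp only [X_mul_Y, X_mul_Z, Y_mul_Z]

lemma gammaFactor_commute {j k i : ℕ} (hjk : j < k) (hi : i ≠ j / 2) :
    Commute (gammaFactor j i) (gammaFactor k i) := by
  unfold gammaFactor
  split_ifs <;> first | omega | simp only [Commute.refl, Commute.one_left]

lemma gammaFactor_anticommute_Z (k : ℕ) :
    gammaFactor k (k / 2) * Z = -(Z * gammaFactor k (k / 2)) := by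
  unfold gammaFactor
  split_ifs <;> first | omega | simp only [X_mul_Z, Y_mul_Z]

lemma gammaFactor_commute_Z {k i : ℕ} (hi : i ≠ k / 2) : Commute (gammaFactor k i) Z := by
  unfold gammaFactor
  split_ifs <;> first | omega | simp only [Commute.refl, Commute.one_left]

lemma gamma_mul_self (n k : ℕ) : gamma n k * gamma n k = 1 :=
  tens_mul_self fun i => gammaFactor_mul_self k i

lemma isHermitian_gamma (n k : ℕ) : (gamma n k).IsHermitian :=
  isHermitian_tens fun i => isHermitian_gammaFactor k i

lemma gamma_anticommute_of_lt {n j k : ℕ} (hjk : j < k) (hj : j / 2 < n) :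
    gamma n j * gamma n k = -(gamma n k * gamma n j) :=
  tens_anticommute ⟨j / 2, hj⟩ (gammaFactor_anticommute hjk)
    fun _ hi => gammaFactor_commute hjk fun h => hi (Fin.ext h)

lemma gamma_anticommute {n j k : ℕ} (hjk : j ≠ k) (hj : j / 2 < n) (hk : k / 2 < n) :
    gamma n j * gamma n k = -(gamma n k * gamma n j) := by
  rcases hjk.lt_or_gt with hlt | hgt
  · exact gamma_anticommute_of_lt hlt hj
  · rw [gamma_anticommute_of_lt hgt hk, neg_neg]

lemma Zstr_eq_tens {n : ℕ} (I : Finset (Fin n)) :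
    Zstr I = tens fun i => if i ∈ I then Z else 1 :=
  rfl

lemma Zstr_mul_self {n : ℕ} (I : Finset (Fin n)) : Zstr I * Zstr I = 1 :=
  tens_mul_self fun _ => by split_ifs <;> simp only [Z_mul_self, mul_one]

lemma isHermitian_Zstr {n : ℕ} (I : Finset (Fin n)) : (Zstr I).IsHermitian :=
  isHermitian_tens fun _ => by split_ifs <;> simp only [isHermitian_Z, isHermitian_one]

lemma gamma_anticommute_Zstr {n k : ℕ} {I : Finset (Fin n)} {a : Fin n} (ha : a ∈ I)
    (hak : (a : ℕ) = k / 2) : gamma n k * Zstr I = -(Zstr I * gamma n k) := by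
  rw [gamma_eq_tens, Zstr_eq_tens]
  refine tens_anticommute a ?_ fun i hi => ?_
  · simp only [if_pos ha, hak, gammaFactor_anticommute_Z]
  · split_ifs
    · exact gammaFactor_commute_Z fun h => hi (Fin.ext (h.trans hak.symm))
    · exact Commute.one_right _

lemma gamma_commute_Zstr {n k : ℕ} {I : Finset (Fin n)} (h : ∀ i ∈ I, (i : ℕ) ≠ k / 2) :
    Commute (gamma n k) (Zstr I) := by
  rw [gamma_eq_tens, Zstr_eq_tens]
  refine tens_commute fun i => ?_
  split_ifs with hi
  · exact gammaFactor_commute_Z (h i hi)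
  · exact Commute.one_right _

-- Phrased with `∃` rather than `⟨k / 2, h⟩ ∈ I`, so that it needs no proof of `k / 2 < n`.
noncomputable def ancillaFactor {n : ℕ} (I : Finset (Fin n)) (k : ℕ) :
    Matrix (ZMod 2) (ZMod 2) ℂ :=
  if ∃ i ∈ I, (i : ℕ) = k / 2 then X else 1

lemma mu_eq_extend_ancillaFactor (n : ℕ) (I : Finset (Fin n)) (k : ℕ) :
    mu n I k = extend (gamma n k) (ancillaFactor I k) := by
  unfold mu ancillaFactor
  split_ifs <;> grind

lemma ancillaFactor_mul_self {n : ℕ} (I : Finset (Fin n)) (k : ℕ) :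
    ancillaFactor I k * ancillaFactor I k = 1 := by
  unfold ancillaFactor
  split_ifs <;> simp only [X_mul_self, mul_one]

lemma isHermitian_ancillaFactor {n : ℕ} (I : Finset (Fin n)) (k : ℕ) :
    (ancillaFactor I k).IsHermitian := by
  unfold ancillaFactor
  split_ifs <;> simp only [isHermitian_X, isHermitian_one]

lemma ancillaFactor_commute {n : ℕ} (I : Finset (Fin n)) (j k : ℕ) :
    Commute (ancillaFactor I j) (ancillaFactor I k) := by
  unfold ancillaFactor
  split_ifs <;> simp only [Commute.refl, Commute.one_left, Commute.one_right]

lemma mu_mul_self (n : ℕ) (I : Finset (Fin n)) (k : ℕ) : mu n I k * mu n I k = 1 := by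
  rw [mu_eq_extend_ancillaFactor]
  exact extend_mul_self (gamma_mul_self n k) (ancillaFactor_mul_self I k)

lemma isHermitian_mu (n : ℕ) (I : Finset (Fin n)) (k : ℕ) : (mu n I k).IsHermitian := by
  rw [mu_eq_extend_ancillaFactor]
  exact isHermitian_extend (isHermitian_gamma n k) (isHermitian_ancillaFactor I k)

lemma mu_anticommute {n j k : ℕ} (I : Finset (Fin n)) (hjk : j ≠ k) (hj : j / 2 < n)
    (hk : k / 2 < n) : mu n I j * mu n I k = -(mu n I k * mu n I j) := by
  simp only [mu_eq_extend_ancillaFactor]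
  exact extend_anticommute (gamma_anticommute hjk hj hk) (ancillaFactor_commute I j k)

lemma mu_commute_stab (n : ℕ) (I : Finset (Fin n)) (k : ℕ) :
    Commute (mu n I k) (stab n I) := by
  rw [mu_eq_extend_ancillaFactor, stab, ancillaFactor]
  split_ifs with h
  · obtain ⟨a, ha, hak⟩ := h
    exact extend_commute_of_anticommute (gamma_anticommute_Zstr ha hak) X_mul_Z
  · push Not at h
    exact commute_extend (gamma_commute_Zstr h) (Commute.one_left Z)

theorem ancilla_majorana_operators_general (n : ℕ) (I : Finset (Fin n)) :
    (stab n I)ᴴ = stab n I ∧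
    stab n I * stab n I = 1 ∧
    (∀ k, k < 2 * n → (mu n I k)ᴴ = mu n I k) ∧
    (∀ j k, j < 2 * n → k < 2 * n →
      mu n I j * mu n I k + mu n I k * mu n I j =
        if j = k then
          (2 : ℂ) • (1 : Matrix (Fin (n + 1) → ZMod 2) (Fin (n + 1) → ZMod 2) ℂ)
        else 0) ∧
    (∀ k, k < 2 * n → mu n I k * stab n I = stab n I * mu n I k) := by
  refine ⟨isHermitian_extend (isHermitian_Zstr I) isHermitian_Z,
    extend_mul_self (Zstr_mul_self I) Z_mul_self, fun k _ => isHermitian_mu n I k,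
    fun j k hj hk => ?_, fun k _ => (mu_commute_stab n I k).eq⟩
  split_ifs with hjk
  · rw [hjk, mu_mul_self, two_smul]
  · rw [mu_anticommute I hjk (by omega) (by omega), neg_add_cancel]

/-- for the stabilizer `S = Z_I ⊗ Z` and modified Majorana operators
`μ_k = Γ_k ⊗ X` (if `⌊k/2⌋ ∈ I`) or `Γ_k ⊗ I₂` (otherwise) on `(ℂ²)^⊗(n+1)`:
`S` is self-adjoint with `S² = I`, each `μ_k` is self-adjoint, the `μ_k` satisfy the Majorana
anticommutation relations, and each `μ_k` commutes with `S`. -/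
theorem ancilla_majorana_operators (n : ℕ) (hn : 1 ≤ n) (I : Finset (Fin n)) :
    (stab n I)ᴴ = stab n I ∧
    stab n I * stab n I = 1 ∧
    (∀ k, k < 2 * n → (mu n I k)ᴴ = mu n I k) ∧
    (∀ j k, j < 2 * n → k < 2 * n →
      mu n I j * mu n I k + mu n I k * mu n I j =
        if j = k then
          (2 : ℂ) • (1 : Matrix (Fin (n + 1) → ZMod 2) (Fin (n + 1) → ZMod 2) ℂ)
        else 0) ∧
    (∀ k, k < 2 * n → mu n I k * stab n I = stab n I * mu n I k) :=
  ancilla_majorana_operators_general n I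

end FQ
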